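/- Let g ≥ 1. Then N · N^T = 2^{g−1} ( 2^g · I − M^+ ), where I is the identity matrix of size k_g^+. -/

import Mathlib

open scoped BigOperators
open Matrix

/-- The quadratic form `Σ_{i=1}^g x_i x_{g+i}` on `𝔽_2^{2g}`, with `𝔽_2^{2g}`
realized as pairs `(x_1,…,x_g), (x_{g+1},…,x_{2g})`. -/
def Qf {g : ℕ} (x : (Fin g → ZMod 2) × (Fin g → ZMod 2)) : ZMod 2 :=
  ∑ i, x.1 i * x.2 i

/-- The `4^g × 4^g` matrix `M(g)` with entry
`M_{m,n} = (−1)^{Σ_i (m_i n_{g+i} + n_i m_{g+i})}` (exponent computed using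
the representatives in `{0,1}`). -/
def Mmat (g : ℕ) :
    Matrix ((Fin g → ZMod 2) × (Fin g → ZMod 2)) ((Fin g → ZMod 2) × (Fin g → ZMod 2)) ℝ :=
  fun m n => (-1 : ℝ) ^ (∑ i, ((m.1 i).val * (n.2 i).val + (n.1 i).val * (m.2 i).val))

/-- `M⁺`, the principal submatrix of `M(g)` indexed by `K_g^+ × K_g^+`. -/
def Mplus (g : ℕ) :
    Matrix {x : (Fin g → ZMod 2) × (Fin g → ZMod 2) // Qf x = 0}
      {x : (Fin g → ZMod 2) × (Fin g → ZMod 2) // Qf x = 0} ℝ :=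
  fun m n => Mmat g m.1 n.1

/-- `M⁻`, the principal submatrix of `M(g)` indexed by `K_g^− × K_g^−`. -/
def Mminus (g : ℕ) :
    Matrix {x : (Fin g → ZMod 2) × (Fin g → ZMod 2) // Qf x = 1}
      {x : (Fin g → ZMod 2) × (Fin g → ZMod 2) // Qf x = 1} ℝ :=
  fun m n => Mmat g m.1 n.1

/-- `N`, the submatrix of `M(g)` indexed by `K_g^+ × K_g^−`. -/
def Nmat (g : ℕ) :
    Matrix {x : (Fin g → ZMod 2) × (Fin g → ZMod 2) // Qf x = 0}
      {x : (Fin g → ZMod 2) × (Fin g → ZMod 2) // Qf x = 1} ℝ :=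
  fun m n => Mmat g m.1 n.1

/-! Write `ψ t = (-1)^t` on `ZMod 2` and `B` for the symplectic form, so that `M_{m,n} = ψ (B m n)`
and `Q (m + n) = Q m + Q n + B m n`. The `(m, n)` entry of `N Nᵀ` is `∑_{x ∈ K⁻} ψ (B c x)` with
`c = m + n`; as `1 - ψ (Q x)` is `2` on `K⁻` and `0` on `K⁺`, twice this entry is
`∑_x ψ (B c x) - ∑_x ψ (Q x + B c x)`. The first sum is `4^g [c = 0]` by orthogonality; completing
the square, `Q x + B c x = Q (x + c) + Q c`, turns the second into `2^g ψ (Q c)`, and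
`Q c = B m n` because `m, n ∈ K⁺`. -/

open Finset

local notation "𝕍" g:max => (Fin g → ZMod 2) × (Fin g → ZMod 2)

theorem AddChar.map_sum_eq_prod {ι A M : Type*} [AddCommMonoid A] [CommMonoid M]
    (ψ : AddChar A M) (s : Finset ι) (f : ι → A) : ψ (∑ i ∈ s, f i) = ∏ i ∈ s, ψ (f i) := by
  classical
  induction s using Finset.induction_on with
  | empty => simp
  | insert i s hi ih => rw [sum_insert hi, prod_insert hi, map_add_eq_mul, ih]

theorem Fintype.sum_prod_pi_eq_prod_sum {ι α β R : Type*} [Fintype ι] [DecidableEq ι]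
    [Fintype α] [Fintype β] [CommSemiring R] (h : ι → α → β → R) :
    ∑ x : (ι → α) × (ι → β), ∏ i, h i (x.1 i) (x.2 i) = ∏ i, ∑ p : α × β, h i p.1 p.2 := by
  rw [Fintype.prod_sum fun i (p : α × β) => h i p.1 p.2]
  exact Fintype.sum_equiv (Equiv.arrowProdEquivProdArrow ι _ _).symm _ _ fun _ => rfl

lemma ZMod.sum_univ_two {M : Type*} [AddCommMonoid M] (f : ZMod 2 → M) :
    ∑ a, f a = f 0 + f 1 :=
  Fin.sum_univ_two f

noncomputable def signChar : AddChar (ZMod 2) ℝ :=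
  AddChar.zmodChar 2 (by norm_num : (-1 : ℝ) ^ 2 = 1)

lemma signChar_natCast (n : ℕ) : signChar n = (-1) ^ n :=
  AddChar.zmodChar_apply' _ n

lemma signChar_one : signChar 1 = -1 := by
  simpa using signChar_natCast 1

lemma sum_signChar_mul_add_mul (u v : ZMod 2) :
    ∑ p : ZMod 2 × ZMod 2, signChar (u * p.2 + p.1 * v) = if u = 0 ∧ v = 0 then 4 else 0 := by
  obtain rfl | rfl : u = 0 ∨ u = 1 := by decide +revert
  all_goals obtain rfl | rfl : v = 0 ∨ v = 1 := by decide +revert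
  all_goals simp [Fintype.sum_prod_type, ZMod.sum_univ_two, signChar_one,
    show (1 + 1 : ZMod 2) = 0 from rfl]

lemma sum_signChar_mul : ∑ p : ZMod 2 × ZMod 2, signChar (p.1 * p.2) = 2 := by
  norm_num [Fintype.sum_prod_type, ZMod.sum_univ_two, signChar_one]

lemma two_mul_sum_subtype_eq_one {α : Type*} [Fintype α] (q : α → ZMod 2) (f : α → ℝ) :
    2 * ∑ x : {x // q x = 1}, f x = ∑ x, f x - ∑ x, signChar (q x) * f x := by
  classical
  have h : ∀ x, f x - signChar (q x) * f x = if q x = 1 then 2 * f x else 0 := by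
    intro x
    obtain h | h : q x = 0 ∨ q x = 1 := by generalize q x = a; decide +revert
    all_goals simp [h, signChar_one, two_mul]
  rw [← sum_sub_distrib, Fintype.sum_congr _ _ h, ← sum_filter, mul_sum]
  exact (sum_subtype {x | q x = 1} (fun x => by simp) (fun x => 2 * f x)).symm

section

variable {g : ℕ}

def symplecticForm (m n : 𝕍 g) : ZMod 2 :=
  ∑ i, (m.1 i * n.2 i + n.1 i * m.2 i)

lemma Mmat_apply (m n : 𝕍 g) : Mmat g m n = signChar (symplecticForm m n) := by
  rw [Mmat, ← signChar_natCast, symplecticForm]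
  push_cast [ZMod.natCast_val, ZMod.cast_id']
  rfl

lemma symplecticForm_comm (m n : 𝕍 g) : symplecticForm m n = symplecticForm n m := by
  simp only [symplecticForm, add_comm]

lemma symplecticForm_add_left (a b x : 𝕍 g) :
    symplecticForm (a + b) x = symplecticForm a x + symplecticForm b x := by
  simp only [symplecticForm, ← sum_add_distrib]
  exact sum_congr rfl fun _ _ => by simp only [Prod.fst_add, Prod.snd_add, Pi.add_apply]; ring

lemma Qf_add (a b : 𝕍 g) : Qf (a + b) = Qf a + Qf b + symplecticForm a b := by
  simp only [Qf, symplecticForm, ← sum_add_distrib]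
  exact sum_congr rfl fun _ _ => by simp only [Prod.fst_add, Prod.snd_add, Pi.add_apply]; ring

lemma Qf_add_symplecticForm (c x : 𝕍 g) : Qf x + symplecticForm c x = Qf (x + c) + Qf c := by
  rw [Qf_add, symplecticForm_comm]
  linear_combination -CharTwo.add_self_eq_zero (Qf c)

lemma sum_signChar_symplecticForm (c : 𝕍 g) :
    ∑ x, signChar (symplecticForm c x) = if c = 0 then 4 ^ g else 0 := by
  simp only [symplecticForm, AddChar.map_sum_eq_prod]
  rw [Fintype.sum_prod_pi_eq_prod_sum fun i a b => signChar (c.1 i * b + a * c.2 i)]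
  simp only [sum_signChar_mul_add_mul, Fintype.prod_ite_zero, prod_const, card_univ,
    Fintype.card_fin]
  congr 1
  simp only [Prod.ext_iff, funext_iff, forall_and, Prod.fst_zero, Prod.snd_zero, Pi.zero_apply]

lemma sum_signChar_Qf : ∑ x : 𝕍 g, signChar (Qf x) = 2 ^ g := by
  simp only [Qf, AddChar.map_sum_eq_prod]
  rw [Fintype.sum_prod_pi_eq_prod_sum fun _ a b => signChar (a * b)]
  simp [sum_signChar_mul]

lemma sum_signChar_Qf_add_symplecticForm (c : 𝕍 g) :
    ∑ x, signChar (Qf x + symplecticForm c x) = 2 ^ g * signChar (Qf c) := by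
  simp only [Qf_add_symplecticForm, AddChar.map_add_eq_mul, ← sum_mul]
  rw [Fintype.sum_equiv (Equiv.addRight c) (fun x => signChar (Qf (x + c)))
    (fun x => signChar (Qf x)) fun _ => rfl, sum_signChar_Qf]

end

lemma two_smul_Nmat_mul_transpose (g : ℕ) :
    (2 : ℝ) • (Nmat g * (Nmat g)ᵀ) = (2 : ℝ) ^ g • ((2 : ℝ) ^ g • 1 - Mplus g) := by
  ext m n
  set c := m.1 + n.1
  have hc : c = 0 ↔ m = n := by
    have : -n.1 = n.1 := by ext <;> simp [ZMod.neg_eq_self_mod_two]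
    rw [add_eq_zero_iff_eq_neg, this, Subtype.ext_iff]
  have hQc : Qf c = symplecticForm m.1 n.1 := by rw [Qf_add, m.2, n.2, zero_add, zero_add]
  calc ((2 : ℝ) • (Nmat g * (Nmat g)ᵀ)) m n
      = 2 * ∑ x : {x // Qf x = 1}, signChar (symplecticForm c x.1) := by
        simp only [Matrix.smul_apply, smul_eq_mul, mul_apply, transpose_apply, Nmat, Mmat_apply,
          symplecticForm_add_left, AddChar.map_add_eq_mul, c]
    _ = ∑ x, signChar (symplecticForm c x) - ∑ x, signChar (Qf x + symplecticForm c x) := by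
        rw [two_mul_sum_subtype_eq_one Qf fun x => signChar (symplecticForm c x)]
        simp only [AddChar.map_add_eq_mul]
    _ = (if c = 0 then 4 ^ g else 0) - 2 ^ g * signChar (Qf c) := by
        rw [sum_signChar_symplecticForm, sum_signChar_Qf_add_symplecticForm]
    _ = ((2 : ℝ) ^ g • ((2 : ℝ) ^ g • 1 - Mplus g)) m n := by
        simp only [Matrix.smul_apply, Matrix.sub_apply, one_apply, Mplus, Mmat_apply, smul_eq_mul,
          ← hQc, ← hc]
        rw [show (4 : ℝ) ^ g = 2 ^ g * 2 ^ g by rw [← mul_pow]; norm_num]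
        split_ifs <;> ring

/-- `N · Nᵀ = 2^{g−1}(2^g · I − M⁺)`. -/
theorem Nmat_mul_transpose (g : ℕ) (hg : 1 ≤ g) :
    Nmat g * (Nmat g)ᵀ = (2 : ℝ) ^ (g - 1) • ((2 : ℝ) ^ g • 1 - Mplus g) := by
  have h2g : (2 : ℝ) ^ g = 2 * 2 ^ (g - 1) := by rw [← pow_succ', Nat.sub_add_cancel hg]
  refine smul_right_injective _ (two_ne_zero : (2 : ℝ) ≠ 0) ?_
  dsimp only
  rw [two_smul_Nmat_mul_transpose, smul_smul, ← h2g]
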